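/- arXiv:1810.06222 — 4 statements merged into one kernel-verified Lean document; each statement's English description precedes it below -/
import Mathlib

section
/- For every g = [[a,b],[c,d]] in SL₂(ℍ) and all quaternions z, w such that cz + d ≠ 0 and cw + d ≠ 0, one has n(g·z - g·w) = n(z - w) / (n(cz+d) n(cw+d)), where g·z = (az+b)(cz+d)⁻¹ denotes the homographic action and n is the reduced norm. -/
/-!
For `c ≠ 0`, writing `az + b = a c⁻¹ (cz + d) - e` with `e = a c⁻¹ d - b` gives
`g·z = a c⁻¹ - e (cz + d)⁻¹`, so `g·z - g·w = e (cw + d)⁻¹ c (z - w) (cz + d)⁻¹`.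
The reduced norm is multiplicative and `n(e) n(c)` is the Study determinant `n(ad) + n(bc) - tr(a c̄ d b̄)`,
which equals `1`. For `c = 0` the difference is `a (z - w) d⁻¹` and the determinant is `n(a) n(d)`.
-/

open Quaternion

section DivisionRing

variable {K : Type*} [DivisionRing K]

theorem mul_add_mul_add_inv_eq_sub (a b c d z : K) (hc : c ≠ 0) (hz : c * z + d ≠ 0) :
    (a * z + b) * (c * z + d)⁻¹ = a * c⁻¹ - (a * c⁻¹ * d - b) * (c * z + d)⁻¹ := by
  have hnum : a * z + b = a * c⁻¹ * (c * z + d) - (a * c⁻¹ * d - b) := by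
    rw [mul_add, mul_assoc a c⁻¹ (c * z), inv_mul_cancel_left₀ hc]
    abel
  rw [hnum, sub_mul, mul_inv_cancel_right₀ hz]

theorem homography_sub_homography (a b c d z w : K) (hc : c ≠ 0) (hz : c * z + d ≠ 0)
    (hw : c * w + d ≠ 0) :
    (a * z + b) * (c * z + d)⁻¹ - (a * w + b) * (c * w + d)⁻¹
      = (a * c⁻¹ * d - b) * (c * w + d)⁻¹ * c * (z - w) * (c * z + d)⁻¹ := by
  rw [mul_add_mul_add_inv_eq_sub a b c d z hc hz, mul_add_mul_add_inv_eq_sub a b c d w hc hw,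
    sub_sub_sub_cancel_left, ← mul_sub, inv_sub_inv' hw hz, add_sub_add_right_eq_sub, ← mul_sub]
  simp only [mul_assoc]

end DivisionRing

namespace Quaternion

variable {R : Type*} [Field R] [LinearOrder R] [IsStrictOrderedRing R]

/-- The Study determinant of `!![a, b; c, d]`, the square of its Dieudonné determinant. -/
def studyDet (a b c d : ℍ[R]) : R :=
  normSq (a * d) + normSq (b * c) - 2 * (a * star c * d * star b).re

theorem studyDet_zero_left (a b d : ℍ[R]) : studyDet a b 0 d = normSq a * normSq d := by
  simp [studyDet]

theorem normSq_mul_inv_mul_sub_mul_normSq (a b c d : ℍ[R]) (hc : c ≠ 0) :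
    normSq (a * c⁻¹ * d - b) * normSq c = studyDet a b c d := by
  have hnc : normSq c ≠ 0 := normSq_ne_zero.2 hc
  have hscale : a * c⁻¹ * d - b = (normSq c)⁻¹ • (a * star c * d - normSq c • b) := by
    rw [inv_def, smul_sub, smul_smul, inv_mul_cancel₀ hnc, one_smul, Algebra.mul_smul_comm,
      smul_mul_assoc]
  rw [hscale, normSq_smul, sub_eq_add_neg, normSq_add, normSq_neg, normSq_smul, star_neg,
    star_smul, mul_neg, mul_smul_comm, re_neg, re_smul, smul_eq_mul]
  simp only [studyDet, map_mul, normSq_star]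
  field_simp
  ring

end Quaternion

/-- Lemma 3.1: for `g = !![a,b;c,d]` in `SL₂(ℍ)` (Dieudonné determinant 1, i.e.
`n(ad) + n(bc) - tr(a c̄ d b̄) = 1`) and quaternions `z`, `w` with
`cz + d ≠ 0` and `cw + d ≠ 0`, one has
`n(g·z - g·w) = n(z - w) / (n(cz+d) n(cw+d))`,
where `g·z = (az+b)(cz+d)⁻¹` and `n = normSq` is the reduced norm. -/
theorem normSq_homography_sub (a b c d z w : Quaternion ℝ)
    (hdet : normSq (a * d) + normSq (b * c) - 2 * (a * star c * d * star b).re = 1)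
    (hz : c * z + d ≠ 0) (hw : c * w + d ≠ 0) :
    normSq ((a * z + b) * (c * z + d)⁻¹ - (a * w + b) * (c * w + d)⁻¹)
      = normSq (z - w) / (normSq (c * z + d) * normSq (c * w + d)) := by
  have hz' : normSq (c * z + d) ≠ 0 := normSq_ne_zero.2 hz
  have hw' : normSq (c * w + d) ≠ 0 := normSq_ne_zero.2 hw
  by_cases hc : c = 0
  · subst hc
    have hdet₀ : normSq a * normSq d = 1 := studyDet_zero_left a b d ▸ hdet
    simp only [zero_mul, zero_add] at hz' hw' ⊢
    rw [← sub_mul, add_sub_add_right_eq_sub, ← mul_sub, map_mul, map_mul, map_inv₀]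
    field_simp
    linear_combination normSq (z - w) * hdet₀
  · have hdet' : normSq (a * c⁻¹ * d - b) * normSq c = 1 :=
      (normSq_mul_inv_mul_sub_mul_normSq a b c d hc).trans hdet
    rw [homography_sub_homography a b c d z w hc hz hw]
    simp only [map_mul, map_inv₀]
    field_simp
    linear_combination normSq (z - w) * hdet'
end

section
/- Let f be a binary Hamiltonian form with matrix M(f) = [[a, b],[b̄, c]] (a, c ∈ ℝ, b ∈ ℍ), and for g ∈ SL₂(ℍ) let f∘g be the form with matrix g* M(f) g. Then the discriminant Δ(f) = n(b) - ac satisfies Δ(f∘g) = Δ(f). -/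
/-!
As for real quadratic forms, where `det (gᵀ M g) = det M * (det g)²`, the discriminant is
multiplied by the (squared) Dieudonné determinant of `g` under `f ↦ f ∘ g`. For quaternions
this is a polynomial identity in the real coordinates of `a, b, c` and of the entries of `g`.
-/

open Quaternion

noncomputable section

/-- The entries of the matrix `g* M(f) g` of the form `f ∘ g`, where
`M(f) = !![a, b; b̄, c]` and `g = !![p, q; r, s]`. -/
def actA (a c : ℝ) (b p q r s : Quaternion ℝ) : ℝ :=
  (star p * ((a : Quaternion ℝ) * p + b * r) + star r * (star b * p + (c : Quaternion ℝ) * r)).re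

def actB (a c : ℝ) (b p q r s : Quaternion ℝ) : Quaternion ℝ :=
  star p * ((a : Quaternion ℝ) * q + b * s) + star r * (star b * q + (c : Quaternion ℝ) * s)

def actC (a c : ℝ) (b p q r s : Quaternion ℝ) : ℝ :=
  (star q * ((a : Quaternion ℝ) * q + b * s) + star s * (star b * q + (c : Quaternion ℝ) * s)).re

def discr (a c : ℝ) (b : Quaternion ℝ) : ℝ :=
  normSq b - a * c

/-- The Dieudonné determinant of `!![p, q; r, s]`, normalised as the square of the usual
one so that it is a polynomial in the entries. -/
def dieudonneDet (p q r s : Quaternion ℝ) : ℝ :=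
  normSq (p * s) + normSq (q * r) - 2 * (p * star r * s * star q).re

theorem discr_act_eq_discr_mul_dieudonneDet (a c : ℝ) (b p q r s : Quaternion ℝ) :
    discr (actA a c b p q r s) (actC a c b p q r s) (actB a c b p q r s)
      = discr a c b * dieudonneDet p q r s := by
  simp only [discr, dieudonneDet, actA, actB, actC, normSq_def', re_mul, imI_mul, imJ_mul,
    imK_mul, re_add, imI_add, imJ_add, imK_add, re_star, imI_star, imJ_star, imK_star,
    re_coe, imI_coe, imJ_coe, imK_coe]
  ring

/-- For a binary Hamiltonian form `f` with matrix `M(f) = !![a,b;b̄,c]`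
(`a, c ∈ ℝ`, `b ∈ ℍ`) and `g = !![p,q;r,s] ∈ SL₂(ℍ)` (Dieudonné determinant 1),
the form `f ∘ g` with matrix `g* M(f) g` has the same discriminant
`Δ(f) = n(b) - a c`. -/
theorem discr_invariant_under_SL2 (a c : ℝ) (b p q r s : Quaternion ℝ)
    (hdet : normSq (p * s) + normSq (q * r) - 2 * (p * star r * s * star q).re = 1) :
    normSq (actB a c b p q r s) - actA a c b p q r s * actC a c b p q r s
      = normSq b - a * c := by
  simpa only [discr, dieudonneDet, hdet, mul_one] using
    discr_act_eq_discr_mul_dieudonneDet a c b p q r s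
end
end

section
/- If the maximal order 𝒪 in a definite quaternion algebra over ℚ is left-Euclidean (i.e., for all a, b ∈ 𝒪 with b ≠ 0, there exist c, d ∈ 𝒪 with a = cb + d and n(d) < n(b)), then SL₂(𝒪) is generated by the matrices J = [[0,1],[1,0]], T_w = [[1,w],[0,1]] for w ∈ 𝒪, and C_{u,v} = [[u,0],[0,v]] for units u, v of 𝒪. -/
/-! An element `x` of an order has integral reduced norm. Its trace is rational, because a `ℚ`-basis
of `A` is an `ℝ`-basis of `ℍ` in which left multiplication by `x` has a rational matrix, so
`n(x) = 2 re(x)² - re(x²)` is rational. On the other hand `x` is integral over `ℤ`, and `x` is the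
image of some `z : ℂ` under an embedding `ℂ → ℍ` with `|z|² = n(x)`, so `n(x) = z z̄` is an
algebraic integer.

Integral norms make the Euclidean algorithm on the first column terminate: `J T_{-q}` preserves
the Dieudonné determinant and replaces the lower-left entry `c` by the remainder `a - q c`, whose
norm is smaller. Once `c = 0`, the determinant forces `n(a) = n(d) = 1`, and then
`M = C_{a,d} T_{a⁻¹ b}`. -/

open Quaternion

noncomputable section

/-- `A` is a definite quaternion algebra over ℚ, realized as a ℚ-subalgebra of
Hamilton's quaternions: it has dimension 4 over ℚ and spans ℍ over ℝ
(i.e. `A ⊗_ℚ ℝ = ℍ`). -/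
def IsDefiniteQuatAlg (A : Subalgebra ℚ (Quaternion ℝ)) : Prop :=
  Module.finrank ℚ A = 4 ∧ Submodule.span ℝ (A : Set (Quaternion ℝ)) = ⊤

/-- `O` is an order in `A`: a unitary subring of `A` which is a finitely
generated ℤ-module generating `A` as a ℚ-vector space. -/
def IsOrder (A : Subalgebra ℚ (Quaternion ℝ)) (O : Subring (Quaternion ℝ)) : Prop :=
  (O : Set (Quaternion ℝ)) ⊆ (A : Set (Quaternion ℝ)) ∧
  (∃ s : Finset (Quaternion ℝ), AddSubgroup.closure (s : Set (Quaternion ℝ)) = O.toAddSubgroup) ∧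
  Submodule.span ℚ (O : Set (Quaternion ℝ)) = Subalgebra.toSubmodule A

/-- `O` is a maximal order in `A`. -/
def IsMaximalOrder (A : Subalgebra ℚ (Quaternion ℝ)) (O : Subring (Quaternion ℝ)) : Prop :=
  IsOrder A O ∧ ∀ O' : Subring (Quaternion ℝ), IsOrder A O' → O ≤ O' → O' = O

/-- The left fractional ideal `O x + O y` of `O`, as a subset of ℍ. -/
def idSet (O : Subring (Quaternion ℝ)) (x y : Quaternion ℝ) : Set (Quaternion ℝ) :=
  {m | ∃ o₁ ∈ O, ∃ o₂ ∈ O, m = o₁ * x + o₂ * y}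

/-- The reduced norm of a (fractional) left ideal of `O`, given as a subset of
ℍ: the greatest common divisor of the reduced norms of its elements, i.e. the
largest positive real `t` such that every `n(m)`, `m ∈ s`, is an integer
multiple of `t`. -/
def idealNorm (s : Set (Quaternion ℝ)) : ℝ :=
  sSup {t : ℝ | 0 < t ∧ ∀ m ∈ s, ∃ k : ℤ, normSq m = t * k}

/-- The generators of `SL₂(O)`: `J = !![0,1;1,0]`. -/
def Jmat : Matrix (Fin 2) (Fin 2) (Quaternion ℝ) := !![0, 1; 1, 0]

/-- `T_w = !![1,w;0,1]`. -/
def Tmat (w : Quaternion ℝ) : Matrix (Fin 2) (Fin 2) (Quaternion ℝ) := !![1, w; 0, 1]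

/-- `C_{u,v} = !![u,0;0,v]`. -/
def Cmat (u v : Quaternion ℝ) : Matrix (Fin 2) (Fin 2) (Quaternion ℝ) := !![u, 0; 0, v]

theorem Quaternion.trace_mulLeft (x : ℍ[ℝ]) :
    LinearMap.trace ℝ ℍ[ℝ] (LinearMap.mulLeft ℝ x) = 4 * x.re := by
  -- `basisOneIJK` is stated for `ℍ[ℝ,-1,0,-1]`, whose instances only unfold to those of `ℍ[ℝ]`,
  -- hence the `erw`s.
  refine (LinearMap.trace_eq_matrix_trace ℝ (QuaternionAlgebra.basisOneIJK _ _ _) _).trans ?_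
  simp only [Matrix.trace, Fin.sum_univ_four, Matrix.diag_apply]
  erw [LinearMap.toMatrix_apply, LinearMap.toMatrix_apply, LinearMap.toMatrix_apply,
    LinearMap.toMatrix_apply]
  simp only [QuaternionAlgebra.basisOneIJK, Module.Basis.coe_ofEquivFun,
    QuaternionAlgebra.coe_linearEquivTuple_symm, QuaternionAlgebra.equivTuple_symm_apply,
    Pi.single_eq_same, ne_eq, one_ne_zero, not_false_eq_true, Pi.single_eq_of_ne, Fin.reduceEq,
    Module.Basis.ofEquivFun_repr_apply, QuaternionAlgebra.coe_linearEquivTuple,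
    QuaternionAlgebra.equivTuple_apply, Matrix.cons_val_zero, zero_ne_one, Matrix.cons_val_one,
    Matrix.cons_val]
  erw [LinearMap.mulLeft_apply, LinearMap.mulLeft_apply, LinearMap.mulLeft_apply,
    LinearMap.mulLeft_apply, QuaternionAlgebra.re_mul, QuaternionAlgebra.imI_mul,
    QuaternionAlgebra.imJ_mul, QuaternionAlgebra.imK_mul]
  simp only [mul_one, mul_zero, add_zero, mul_neg, neg_zero, zero_mul, neg_neg, sub_zero]
  ring

theorem Quaternion.exists_mul_self_eq_neg_one_smul_eq_im (x : ℍ[ℝ]) :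
    ∃ u : ℍ[ℝ], u * u = -1 ∧ ‖x.im‖ • u = x.im := by
  by_cases him : x.im = 0
  · refine ⟨ofComplex Complex.I, ?_, by rw [him, norm_zero, zero_smul]⟩
    rw [← map_mul, Complex.I_mul_I, map_neg, map_one]
  · refine ⟨‖x.im‖⁻¹ • x.im, ?_, smul_inv_smul₀ (norm_ne_zero_iff.2 him) _⟩
    rw [smul_mul_smul_comm, ← sq x.im, im_sq, normSq_eq_norm_mul_self, smul_neg, smul_coe,
      ← mul_inv, inv_mul_cancel₀ (by positivity), coe_one]

theorem Quaternion.exists_algHom_complex_apply_eq (x : ℍ[ℝ]) :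
    ∃ (φ : ℂ →ₐ[ℝ] ℍ[ℝ]) (z : ℂ), φ z = x ∧ Complex.normSq z = normSq x := by
  obtain ⟨u, hu, hxu⟩ := x.exists_mul_self_eq_neg_one_smul_eq_im
  refine ⟨Complex.liftAux u hu, ⟨x.re, ‖x.im‖⟩, ?_, ?_⟩
  · rw [Complex.liftAux_apply, hxu]
    exact x.re_add_im
  · rw [Complex.normSq_mk, ← normSq_eq_norm_mul_self]
    simp only [normSq_def', re_im, imI_im, imJ_im, imK_im]
    ring

theorem Quaternion.isIntegral_normSq {x : ℍ[ℝ]} (hx : IsIntegral ℤ x) :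
    IsIntegral ℤ (normSq x) := by
  obtain ⟨φ, z, rfl, hz⟩ := x.exists_algHom_complex_apply_eq
  have hzint : IsIntegral ℤ z :=
    (isIntegral_algHom_iff φ.toRingHom.toIntAlgHom φ.toRingHom.injective).1 hx
  have hmul : IsIntegral ℤ (z * (starRingEnd ℂ) z) :=
    hzint.mul (hzint.map (starRingEnd ℂ).toIntAlgHom)
  rw [Complex.mul_conj, hz] at hmul
  exact (isIntegral_algHom_iff Complex.ofRealHom.toIntAlgHom Complex.ofReal_injective).1 hmul

theorem Subring.isIntegral_of_fg {B : Type*} [Ring B] {O : Subring B} (hO : O.toAddSubgroup.FG)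
    {x : B} (hx : x ∈ O) : IsIntegral ℤ x :=
  IsIntegral.of_mem_of_fg (subalgebraOfSubring O) ((Submodule.fg_iff_addSubgroup_fg _).2 hO) x hx

theorem exists_intCast_eq_of_isIntegral {q : ℚ} (h : IsIntegral ℤ (q : ℝ)) :
    ∃ k : ℤ, (k : ℝ) = q := by
  obtain ⟨k, hk⟩ := IsIntegrallyClosed.isIntegral_iff.1 <|
    (isIntegral_algHom_iff (Rat.castHom ℝ).toIntAlgHom Rat.cast_injective).1 h
  exact ⟨k, by simp [← hk]⟩

theorem Module.Basis.repr_apply_eq_algebraMap {ι K L W V : Type*} [Fintype ι] [Field K] [Field L]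
    [Algebra K L] [AddCommGroup W] [Module K W] [AddCommGroup V] [Module K V] [Module L V]
    [IsScalarTower K L V] (f : W →ₗ[K] V) (b : Module.Basis ι K W) (e : Module.Basis ι L V)
    (he : ∀ i, e i = f (b i)) (y : W) (i : ι) :
    e.repr (f y) i = algebraMap K L (b.repr y i) := by
  have hy : f y = e.equivFun.symm fun j => algebraMap K L (b.repr y j) := by
    conv_lhs => rw [← b.sum_repr y, map_sum]
    simp [he, algebraMap_smul]
  rw [hy, ← e.equivFun_apply, LinearEquiv.apply_symm_apply]

namespace IsDefiniteQuatAlg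

variable {A : Subalgebra ℚ ℍ[ℝ]}

theorem exists_basis (hA : IsDefiniteQuatAlg A) :
    ∃ (b : Module.Basis (Fin 4) ℚ A) (e : Module.Basis (Fin 4) ℝ ℍ[ℝ]), ∀ i, e i = b i := by
  have : Module.Finite ℚ A := Module.finite_of_finrank_pos (by rw [hA.1]; norm_num)
  let b := Module.finBasisOfFinrankEq ℚ A hA.1
  have hspan : ⊤ ≤ Submodule.span ℝ (Set.range fun i => (b i : ℍ[ℝ])) := by
    rw [← hA.2, Submodule.span_le]
    intro y hy
    have := Submodule.apply_mem_span_image_of_mem_span A.val.toLinearMap (b.mem_span ⟨y, hy⟩)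
    rw [← Set.range_comp] at this
    exact Submodule.span_le_restrictScalars ℚ ℝ _ this
  exact ⟨b, basisOfTopLeSpanOfCardEqFinrank _ hspan (by simp [Quaternion.finrank_eq_four]),
    fun i => by rw [coe_basisOfTopLeSpanOfCardEqFinrank]⟩

theorem exists_ratCast_eq_re (hA : IsDefiniteQuatAlg A) {x : ℍ[ℝ]} (hx : x ∈ A) :
    ∃ q : ℚ, (q : ℝ) = x.re := by
  obtain ⟨b, e, he⟩ := hA.exists_basis
  refine ⟨(∑ i, b.repr (⟨x, hx⟩ * b i) i) / 4, ?_⟩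
  have htr := LinearMap.trace_eq_matrix_trace ℝ e (LinearMap.mulLeft ℝ x)
  have hrat (i : Fin 4) : e.repr (x * b i) i = b.repr (⟨x, hx⟩ * b i) i :=
    Module.Basis.repr_apply_eq_algebraMap A.val.toLinearMap b e he (⟨x, hx⟩ * b i) i
  simp only [Quaternion.trace_mulLeft, Matrix.trace, Matrix.diag_apply, LinearMap.toMatrix_apply,
    LinearMap.mulLeft_apply, he, hrat] at htr
  push_cast
  linarith

theorem exists_ratCast_eq_normSq (hA : IsDefiniteQuatAlg A) {x : ℍ[ℝ]} (hx : x ∈ A) :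
    ∃ q : ℚ, (q : ℝ) = normSq x := by
  obtain ⟨q, hq⟩ := hA.exists_ratCast_eq_re hx
  obtain ⟨r, hr⟩ := hA.exists_ratCast_eq_re (A.mul_mem hx hx)
  refine ⟨2 * q ^ 2 - r, ?_⟩
  push_cast
  rw [hq, hr, normSq_def', re_mul]
  ring

end IsDefiniteQuatAlg

theorem IsOrder.exists_natCast_eq_normSq {A : Subalgebra ℚ ℍ[ℝ]} {O : Subring ℍ[ℝ]}
    (hA : IsDefiniteQuatAlg A) (hO : IsOrder A O) {x : ℍ[ℝ]} (hx : x ∈ O) :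
    ∃ n : ℕ, normSq x = n := by
  obtain ⟨q, hq⟩ := hA.exists_ratCast_eq_normSq (hO.1 hx)
  obtain ⟨k, hk⟩ := exists_intCast_eq_of_isIntegral <|
    hq ▸ Quaternion.isIntegral_normSq (Subring.isIntegral_of_fg hO.2.1 hx)
  lift k to ℕ using Int.cast_nonneg_iff.1 (by rw [hk, hq]; exact normSq_nonneg)
  exact ⟨k, by rw [← hq, ← hk, Int.cast_natCast]⟩

theorem Jmat_mul (M : Matrix (Fin 2) (Fin 2) ℍ[ℝ]) :
    Jmat * M = !![M 1 0, M 1 1; M 0 0, M 0 1] := by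
  rw [Matrix.eta_fin_two M, Jmat, Matrix.mul_fin_two]
  simp

theorem Tmat_mul (w : ℍ[ℝ]) (M : Matrix (Fin 2) (Fin 2) ℍ[ℝ]) :
    Tmat w * M = !![M 0 0 + w * M 1 0, M 0 1 + w * M 1 1; M 1 0, M 1 1] := by
  rw [Matrix.eta_fin_two M, Tmat, Matrix.mul_fin_two]
  simp

theorem Jmat_mul_Jmat : Jmat * Jmat = 1 := by
  rw [Jmat_mul, Matrix.one_fin_two]
  simp [Jmat]

theorem Tmat_mul_Tmat (v w : ℍ[ℝ]) : Tmat v * Tmat w = Tmat (v + w) := by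
  rw [Tmat_mul, Tmat, Tmat]
  simp [add_comm]

theorem Tmat_zero : Tmat 0 = 1 := by
  rw [Tmat, Matrix.one_fin_two]

theorem Cmat_mul_Tmat (u v w : ℍ[ℝ]) : Cmat u v * Tmat w = !![u, u * w; 0, v] := by
  rw [Cmat, Tmat, Matrix.mul_fin_two]
  simp

def dieudonneDetSq (M : Matrix (Fin 2) (Fin 2) ℍ[ℝ]) : ℝ :=
  normSq (M 0 0 * M 1 1) + normSq (M 0 1 * M 1 0)
    - 2 * (M 0 0 * star (M 1 0) * M 1 1 * star (M 0 1)).re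

theorem dieudonneDetSq_Jmat_mul (M : Matrix (Fin 2) (Fin 2) ℍ[ℝ]) :
    dieudonneDetSq (Jmat * M) = dieudonneDetSq M := by
  simp only [dieudonneDetSq, Jmat_mul, Matrix.of_apply, Matrix.cons_val', Matrix.cons_val_zero,
    Matrix.cons_val_one, Matrix.empty_val', Matrix.cons_val_fin_one]
  simp only [normSq_def', re_mul, imI_mul, imJ_mul, imK_mul, re_star, imI_star, imJ_star, imK_star]
  ring

theorem dieudonneDetSq_Tmat_mul (w : ℍ[ℝ]) (M : Matrix (Fin 2) (Fin 2) ℍ[ℝ]) :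
    dieudonneDetSq (Tmat w * M) = dieudonneDetSq M := by
  simp only [dieudonneDetSq, Tmat_mul, Matrix.of_apply, Matrix.cons_val', Matrix.cons_val_zero,
    Matrix.cons_val_one, Matrix.empty_val', Matrix.cons_val_fin_one]
  simp only [normSq_def', re_mul, imI_mul, imJ_mul, imK_mul, re_star, imI_star, imJ_star, imK_star,
    re_add, imI_add, imJ_add, imK_add, star_add]
  ring

def elementaryGenerators (O : Subring ℍ[ℝ]) : Set (Matrix (Fin 2) (Fin 2) ℍ[ℝ]) :=
  {Jmat} ∪ {m | ∃ w ∈ O, m = Tmat w} ∪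
    {m | ∃ u ∈ O, ∃ v ∈ O, normSq u = 1 ∧ normSq v = 1 ∧ m = Cmat u v}

def IsLeftEuclidean (O : Subring ℍ[ℝ]) : Prop :=
  ∀ a ∈ O, ∀ b ∈ O, b ≠ 0 → ∃ c ∈ O, ∃ d ∈ O, a = c * b + d ∧ normSq d < normSq b

section Descent

variable {O : Subring ℍ[ℝ]}

theorem Jmat_mem_closure : Jmat ∈ Submonoid.closure (elementaryGenerators O) :=
  Submonoid.subset_closure (.inl (.inl rfl))

theorem Tmat_mem_closure {w : ℍ[ℝ]} (hw : w ∈ O) :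
    Tmat w ∈ Submonoid.closure (elementaryGenerators O) :=
  Submonoid.subset_closure (.inl (.inr ⟨w, hw, rfl⟩))

theorem Cmat_mem_closure {u v : ℍ[ℝ]} (hu : u ∈ O) (hv : v ∈ O) (hu1 : normSq u = 1)
    (hv1 : normSq v = 1) : Cmat u v ∈ Submonoid.closure (elementaryGenerators O) :=
  Submonoid.subset_closure (.inr ⟨u, hu, v, hv, hu1, hv1, rfl⟩)

theorem Jmat_mul_mem {M : Matrix (Fin 2) (Fin 2) ℍ[ℝ]} (hM : ∀ i j, M i j ∈ O) (i j : Fin 2) :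
    (Jmat * M) i j ∈ O := by
  rw [Jmat_mul]
  fin_cases i <;> fin_cases j <;> simp [hM]

theorem Tmat_mul_mem {w : ℍ[ℝ]} (hw : w ∈ O) {M : Matrix (Fin 2) (Fin 2) ℍ[ℝ]}
    (hM : ∀ i j, M i j ∈ O) (i j : Fin 2) : (Tmat w * M) i j ∈ O := by
  rw [Tmat_mul]
  fin_cases i <;> fin_cases j <;> simp [hM, add_mem, mul_mem, hw]

theorem IsLeftEuclidean.inv_mem (hEuc : IsLeftEuclidean O)
    (hnorm : ∀ x ∈ O, ∃ n : ℕ, normSq x = n) {a : ℍ[ℝ]} (ha : a ∈ O) (ha1 : normSq a = 1) :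
    a⁻¹ ∈ O := by
  obtain ⟨c, hc, d, hd, hcd, hlt⟩ := hEuc 1 O.one_mem a ha (by rintro rfl; simp at ha1)
  obtain ⟨n, hn⟩ := hnorm d hd
  have hd0 : d = 0 := by
    rw [hn, ha1] at hlt
    have hn0 : n < 1 := by exact_mod_cast hlt
    rw [← normSq_eq_zero, hn, Nat.lt_one_iff.1 hn0, Nat.cast_zero]
  rw [hd0, add_zero] at hcd
  rwa [← eq_inv_of_mul_eq_one_left hcd.symm]

theorem mem_closure_of_lower_left_eq_zero (hEuc : IsLeftEuclidean O)
    (hnorm : ∀ x ∈ O, ∃ n : ℕ, normSq x = n) {M : Matrix (Fin 2) (Fin 2) ℍ[ℝ]}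
    (hM : ∀ i j, M i j ∈ O) (hdet : dieudonneDetSq M = 1) (h10 : M 1 0 = 0) :
    M ∈ Submonoid.closure (elementaryGenerators O) := by
  have hprod : normSq (M 0 0) * normSq (M 1 1) = 1 := by
    simpa [dieudonneDetSq, h10] using hdet
  obtain ⟨m, hm⟩ := hnorm _ (hM 0 0)
  obtain ⟨n, hn⟩ := hnorm _ (hM 1 1)
  rw [hm, hn] at hprod
  obtain ⟨rfl, rfl⟩ := mul_eq_one.1 (by exact_mod_cast hprod : m * n = 1)
  rw [Nat.cast_one] at hm hn
  have hM_eq : M = Cmat (M 0 0) (M 1 1) * Tmat ((M 0 0)⁻¹ * M 0 1) := by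
    rw [Cmat_mul_Tmat, mul_inv_cancel_left₀ (by rintro h; simp [h] at hm), ← h10,
      ← Matrix.eta_fin_two M]
  rw [hM_eq]
  exact mul_mem (Cmat_mem_closure (hM 0 0) (hM 1 1) hm hn)
    (Tmat_mem_closure (O.mul_mem (hEuc.inv_mem hnorm (hM 0 0) hm) (hM 0 1)))

theorem mem_closure_of_dieudonneDetSq_eq_one (hEuc : IsLeftEuclidean O)
    (hnorm : ∀ x ∈ O, ∃ n : ℕ, normSq x = n) {M : Matrix (Fin 2) (Fin 2) ℍ[ℝ]}
    (hM : ∀ i j, M i j ∈ O) (hdet : dieudonneDetSq M = 1) :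
    M ∈ Submonoid.closure (elementaryGenerators O) := by
  obtain ⟨n, hn⟩ := hnorm _ (hM 1 0)
  induction n using Nat.strong_induction_on generalizing M with
  | _ n ih =>
  by_cases h10 : M 1 0 = 0
  · exact mem_closure_of_lower_left_eq_zero hEuc hnorm hM hdet h10
  obtain ⟨q, hq, r, hr, hqr, hlt⟩ := hEuc _ (hM 0 0) _ (hM 1 0) h10
  set M' := Jmat * (Tmat (-q) * M) with hM'
  have hM'r : M' 1 0 = r := by
    simp [hM', Jmat_mul, Tmat_mul, hqr]
  obtain ⟨m, hm⟩ := hnorm r hr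
  have hM'mem : M' ∈ Submonoid.closure (elementaryGenerators O) := by
    refine ih m ?_ (Jmat_mul_mem (Tmat_mul_mem (O.neg_mem hq) hM)) ?_ (by rw [hM'r, hm])
    · rw [hm, hn] at hlt
      exact_mod_cast hlt
    · rw [hM', dieudonneDetSq_Jmat_mul, dieudonneDetSq_Tmat_mul, hdet]
  have hM_eq : M = Tmat q * Jmat * M' := by
    rw [hM', ← mul_assoc, mul_assoc (Tmat q), Jmat_mul_Jmat, mul_one, ← mul_assoc,
      Tmat_mul_Tmat, add_neg_cancel, Tmat_zero, one_mul]
  rw [hM_eq]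
  exact mul_mem (mul_mem (Tmat_mem_closure hq) Jmat_mem_closure) hM'mem

end Descent

/-- If a maximal order `O` in a definite quaternion algebra `A` over ℚ is
left-Euclidean, then every element of `SL₂(O)` (entries in `O`, Dieudonné
determinant 1, the latter squared being `n(ad) + n(bc) - tr(a c̄ d b̄)`) is a
product of the matrices `J`, `T_w` (`w ∈ O`) and `C_{u,v}` (`u, v` units of
`O`, i.e. elements of reduced norm 1). -/
theorem SL2_generated_by_elementary (A : Subalgebra ℚ (Quaternion ℝ))
    (O : Subring (Quaternion ℝ)) (hA : IsDefiniteQuatAlg A) (hO : IsMaximalOrder A O)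
    (hEuc : ∀ a ∈ O, ∀ b ∈ O, b ≠ 0 →
      ∃ c ∈ O, ∃ d ∈ O, a = c * b + d ∧ normSq d < normSq b)
    (M : Matrix (Fin 2) (Fin 2) (Quaternion ℝ))
    (hM : ∀ i j, M i j ∈ O)
    (hdet : normSq (M 0 0 * M 1 1) + normSq (M 0 1 * M 1 0)
      - 2 * (M 0 0 * star (M 1 0) * M 1 1 * star (M 0 1)).re = 1) :
    M ∈ Submonoid.closure
      ({Jmat} ∪ {m | ∃ w ∈ O, m = Tmat w} ∪
        {m | ∃ u ∈ O, ∃ v ∈ O, normSq u = 1 ∧ normSq v = 1 ∧ m = Cmat u v}) :=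
  mem_closure_of_dieudonneDetSq_eq_one hEuc
    (fun _ hx => hO.1.exists_natCast_eq_normSq hA hx) hM hdet
end
end

section
/- Let a, b ∈ 𝒪 with b ≠ 0 in a maximal order 𝒪 of a definite quaternion algebra A over ℚ. If a and b are both nonzero, then the inverse of the left fractional ideal 𝒪a + 𝒪b equals a⁻¹𝒪 ∩ b⁻¹𝒪, and consequently the set {x ∈ A : (ax, bx) ∈ 𝒪 × 𝒪} equals (𝒪a + 𝒪b)⁻¹. -/
open Quaternion

noncomputable section

/-- The inverse of the left fractional ideal `I` of `O` (given as a subset of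
ℍ): `I⁻¹ = {x ∈ A : I x I ⊆ I}`. -/
def idealInv (A : Subalgebra ℚ (Quaternion ℝ)) (I : Set (Quaternion ℝ)) :
    Set (Quaternion ℝ) :=
  {x | x ∈ A ∧ ∀ i ∈ I, ∀ j ∈ I, i * x * j ∈ I}

/-! The left order `{y ∈ A : y I ⊆ I}` of the integral left ideal `I = O a + O b` contains `O`,
spans `A`, and embeds into `O` via `y ↦ y a`; hence it is an order, and by maximality it is `O`.
So `x ∈ I⁻¹` forces `i x` into the left order `O` for every `i ∈ I`, and conversely `I x ⊆ O` gives
`I x I ⊆ O I ⊆ I`: the inverse is `{x ∈ A : a x, b x ∈ O}`. Since `A` is spanned by the finitely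
generated `O`, it is finite-dimensional, so `a⁻¹ ∈ A`; this identifies the set with `a⁻¹ O ∩ b⁻¹ O`.
-/

theorem AddSubgroup.FG.of_map_le_of_injective {G H : Type*} [AddCommGroup G] [AddCommGroup H]
    {K : AddSubgroup G} {L : AddSubgroup H} (hL : L.FG) (f : G →+ H)
    (hf : Function.Injective f) (hKL : K.map f ≤ L) : K.FG := by
  rw [← AddSubgroup.toIntSubmodule_toAddSubgroup K, ← Submodule.fg_iff_addSubgroup_fg]
  rw [← AddSubgroup.toIntSubmodule_toAddSubgroup L, ← Submodule.fg_iff_addSubgroup_fg] at hL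
  exact Submodule.fg_of_fg_map_injective f.toIntLinearMap hf (hL.of_le hKL)

section

variable {A : Subalgebra ℚ ℍ[ℝ]} {O : Subring ℍ[ℝ]}

theorem IsOrder.finiteDimensional (hO : IsOrder A O) : FiniteDimensional ℚ A := by
  obtain ⟨-, ⟨s, hs⟩, hspan⟩ := hO
  have hOs : (O : Set ℍ[ℝ]) ⊆ Submodule.span ℚ (s : Set ℍ[ℝ]) := fun o ho =>
    (AddSubgroup.closure_le (K := (Submodule.span ℚ (s : Set ℍ[ℝ])).toAddSubgroup)).mpr
      Submodule.subset_span (hs ▸ ho)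
  have hfg : (Subalgebra.toSubmodule A).FG :=
    (Submodule.fg_span s.finite_toSet).of_le (hspan ▸ Submodule.span_le.mpr hOs)
  exact Subalgebra.finiteDimensional_toSubmodule.mp (Module.Finite.iff_fg.mpr hfg)

theorem idSet_eq_span (O : Subring ℍ[ℝ]) (a b : ℍ[ℝ]) :
    idSet O a b = Submodule.span O {a, b} := by
  ext m
  simp only [idSet, Set.mem_ofPred_eq, SetLike.mem_coe, Submodule.mem_span_pair, Subtype.exists,
    Subring.smul_def, smul_eq_mul, exists_prop]
  grind

theorem idSet_subset {a b : ℍ[ℝ]} (ha : a ∈ O) (hb : b ∈ O) : idSet O a b ⊆ O := by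
  rintro _ ⟨o₁, h₁, o₂, h₂, rfl⟩
  exact add_mem (mul_mem h₁ ha) (mul_mem h₂ hb)

def leftOrder (A : Subalgebra ℚ ℍ[ℝ]) (I : Submodule O ℍ[ℝ]) : Subring ℍ[ℝ] where
  carrier := {y | y ∈ A ∧ ∀ i ∈ I, y * i ∈ I}
  one_mem' := ⟨one_mem A, fun i hi => by rwa [one_mul]⟩
  zero_mem' := ⟨zero_mem A, fun i _ => by rw [zero_mul]; exact zero_mem I⟩
  add_mem' := fun ⟨hxA, hx⟩ ⟨hyA, hy⟩ =>
    ⟨add_mem hxA hyA, fun i hi => by rw [add_mul]; exact add_mem (hx i hi) (hy i hi)⟩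
  neg_mem' := fun ⟨hxA, hx⟩ =>
    ⟨neg_mem hxA, fun i hi => by rw [neg_mul]; exact neg_mem (hx i hi)⟩
  mul_mem' := fun ⟨hxA, hx⟩ ⟨hyA, hy⟩ =>
    ⟨mul_mem hxA hyA, fun i hi => by rw [mul_assoc]; exact hx _ (hy i hi)⟩

theorem le_leftOrder (hOA : (O : Set ℍ[ℝ]) ⊆ A) (I : Submodule O ℍ[ℝ]) : O ≤ leftOrder A I :=
  fun o ho => ⟨hOA ho, fun _ hi => I.smul_mem ⟨o, ho⟩ hi⟩

theorem isOrder_leftOrder {I : Submodule O ℍ[ℝ]} (hO : IsOrder A O) (hIO : (I : Set ℍ[ℝ]) ⊆ O)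
    {a : ℍ[ℝ]} (haI : a ∈ I) (ha0 : a ≠ 0) : IsOrder A (leftOrder A I) := by
  have hfg : (leftOrder A I).toAddSubgroup.FG := by
    obtain ⟨s, hs⟩ := hO.2.1
    refine AddSubgroup.FG.of_map_le_of_injective ⟨s, hs⟩ (AddMonoidHom.mulRight a)
      (mul_left_injective₀ ha0) ?_
    rintro _ ⟨y, ⟨-, hy⟩, rfl⟩
    exact hIO (hy a haI)
  refine ⟨fun y hy => hy.1, hfg, le_antisymm (Submodule.span_le.mpr fun y hy => hy.1) ?_⟩
  exact hO.2.2 ▸ Submodule.span_mono (le_leftOrder hO.1 I)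

theorem IsMaximalOrder.leftOrder_eq {I : Submodule O ℍ[ℝ]} (hO : IsMaximalOrder A O)
    (hIO : (I : Set ℍ[ℝ]) ⊆ O) {a : ℍ[ℝ]} (haI : a ∈ I) (ha0 : a ≠ 0) :
    leftOrder A I = O :=
  hO.2 _ (isOrder_leftOrder hO.1 hIO haI ha0) (le_leftOrder hO.1.1 I)

theorem IsMaximalOrder.idealInv_eq {I : Submodule O ℍ[ℝ]} (hO : IsMaximalOrder A O)
    (hIO : (I : Set ℍ[ℝ]) ⊆ O) {a : ℍ[ℝ]} (haI : a ∈ I) (ha0 : a ≠ 0) :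
    idealInv A I = {x | x ∈ A ∧ ∀ i ∈ I, i * x ∈ O} := by
  ext x
  refine ⟨fun ⟨hxA, hx⟩ => ⟨hxA, fun i hi => ?_⟩, fun ⟨hxA, hx⟩ => ⟨hxA, fun i hi j hj => ?_⟩⟩
  · rw [← hO.leftOrder_eq hIO haI ha0]
    exact ⟨mul_mem (hO.1.1 (hIO hi)) hxA, hx i hi⟩
  · exact I.smul_mem ⟨i * x, hx i hi⟩ hj

theorem forall_mem_span_pair_mul_mem_iff {a b x : ℍ[ℝ]} :
    (∀ i ∈ Submodule.span O {a, b}, i * x ∈ O) ↔ a * x ∈ O ∧ b * x ∈ O := by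
  refine ⟨fun h => ⟨h a (Submodule.subset_span (by simp)), h b (Submodule.subset_span (by simp))⟩,
    fun ⟨hax, hbx⟩ i hi => ?_⟩
  obtain ⟨c, d, rfl⟩ := Submodule.mem_span_pair.mp hi
  simp only [Subring.smul_def, smul_eq_mul, add_mul, mul_assoc]
  exact add_mem (mul_mem c.2 hax) (mul_mem d.2 hbx)

theorem setOf_eq_inv_mul_mem {a : ℍ[ℝ]} (ha0 : a ≠ 0) :
    {x | ∃ o ∈ O, x = a⁻¹ * o} = {x | a * x ∈ O} := by
  ext x
  refine ⟨fun ⟨o, ho, hx⟩ => ?_, fun hx => ⟨a * x, hx, (inv_mul_cancel_left₀ ha0 x).symm⟩⟩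
  rwa [Set.mem_ofPred_eq, hx, mul_inv_cancel_left₀ ha0]

end

theorem inv_of_ideal_gen_by_two_general (A : Subalgebra ℚ (Quaternion ℝ))
    (O : Subring (Quaternion ℝ)) (hO : IsMaximalOrder A O)
    (a b : Quaternion ℝ) (ha : a ∈ O) (hb : b ∈ O) (ha0 : a ≠ 0) (hb0 : b ≠ 0) :
    idealInv A (idSet O a b)
        = {x | ∃ o ∈ O, x = a⁻¹ * o} ∩ {x | ∃ o ∈ O, x = b⁻¹ * o} ∧
    {x : Quaternion ℝ | x ∈ A ∧ a * x ∈ O ∧ b * x ∈ O} = idealInv A (idSet O a b) := by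
  have hinv : idealInv A (idSet O a b) = {x | x ∈ A ∧ a * x ∈ O ∧ b * x ∈ O} := by
    have hIO := idSet_subset ha hb
    rw [idSet_eq_span] at hIO ⊢
    simp_rw [hO.idealInv_eq hIO (Submodule.subset_span (by simp)) ha0,
      forall_mem_span_pair_mul_mem_iff]
  refine ⟨?_, hinv.symm⟩
  have : FiniteDimensional ℚ A := hO.1.finiteDimensional
  have haA : a⁻¹ ∈ A := Algebra.IsIntegral.inv_mem (hO.1.1 ha)
  rw [hinv, setOf_eq_inv_mul_mem ha0, setOf_eq_inv_mul_mem hb0]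
  ext x
  refine ⟨fun ⟨_, hax, hbx⟩ => ⟨hax, hbx⟩, fun ⟨hax, hbx⟩ => ⟨?_, hax, hbx⟩⟩
  exact inv_mul_cancel_left₀ ha0 x ▸ mul_mem haA (hO.1.1 hax)

/-- For nonzero `a, b` in a maximal order `O` of a definite quaternion algebra
`A` over ℚ, the inverse of the left ideal `Oa + Ob` is `a⁻¹O ∩ b⁻¹O`, and
consequently `{x ∈ A : (ax, bx) ∈ O × O} = (Oa + Ob)⁻¹`. -/
theorem inv_of_ideal_gen_by_two (A : Subalgebra ℚ (Quaternion ℝ))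
    (O : Subring (Quaternion ℝ)) (hA : IsDefiniteQuatAlg A) (hO : IsMaximalOrder A O)
    (a b : Quaternion ℝ) (ha : a ∈ O) (hb : b ∈ O) (ha0 : a ≠ 0) (hb0 : b ≠ 0) :
    idealInv A (idSet O a b)
        = {x | ∃ o ∈ O, x = a⁻¹ * o} ∩ {x | ∃ o ∈ O, x = b⁻¹ * o} ∧
    {x : Quaternion ℝ | x ∈ A ∧ a * x ∈ O ∧ b * x ∈ O} = idealInv A (idSet O a b) :=
  inv_of_ideal_gen_by_two_general A O hO a b ha hb ha0 hb0
end
end
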